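/- arXiv:1412.3016 — 7 statements merged into one kernel-verified Lean document; each statement's English description precedes it below -/
import Mathlib

section
/- If u is a cover of x and v is a cover of u, then v is a cover of x (the 'cascading' property of covers). -/
/-- Occurrence of the prefix x[1..j] at position p (1-based). -/
def OccAt {α : Type*} (x : ℕ → α) (j p : ℕ) : Prop :=
  ∀ k < j, x (p + k) = x (1 + k)

/-- The prefix x[1..j] is a cover of x[1..i]: it is nonempty, proper, and every
position t ∈ 1..i lies within an occurrence of x[1..j] inside x[1..i]. -/
def Covers {α : Type*} (x : ℕ → α) (i j : ℕ) : Prop :=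
  0 < j ∧ j < i ∧ ∀ t, 1 ≤ t → t ≤ i →
    ∃ p, 1 ≤ p ∧ p + j ≤ i + 1 ∧ p ≤ t ∧ t < p + j ∧ OccAt x j p

/-- if u = x[1..ju] is a cover of x = x[1..n] and v = x[1..jv] is a
cover of u, then v is a cover of x (cascading property of covers). -/
theorem cover_cascade {α : Type*} (x : ℕ → α) (n ju jv : ℕ)
    (hu : Covers x n ju) (hv : Covers x ju jv) : Covers x n jv := by
  obtain ⟨hju, hjun, hcovu⟩ := hu
  obtain ⟨hjv, hjvu, hcovv⟩ := hv
  refine ⟨hjv, lt_trans hjvu hjun, fun t ht1 htn => ?_⟩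
  obtain ⟨p, hp1, hpn, hpt, htp, hoccp⟩ := hcovu t ht1 htn
  obtain ⟨q, hq1, hqu, hqs, hsq, hoccq⟩ :=
    hcovv (t - p + 1) (by omega) (by omega)
  refine ⟨p + q - 1, by omega, by omega, by omega, by omega, fun k hk => ?_⟩
  have h1 : p + q - 1 + k = p + (q - 1 + k) := by omega
  have h2 : q - 1 + k < ju := by omega
  have h3 : 1 + (q - 1 + k) = q + k := by omega
  rw [h1, hoccp _ h2, h3, hoccq k hk]
end

section
/- The prefix x[1..j] (j < i) is a border of x[1..i] if and only if π[i-j+1] ≥ j, where π is the prefix table of x; consequently the prefix table determines all borders of every prefix of x. -/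
/-- x[1..j] is a border of x[1..i] (possibly empty, proper). -/
def IsBorder {α : Type*} (x : ℕ → α) (i j : ℕ) : Prop :=
  j < i ∧ ∀ k < j, x (1 + k) = x (i - j + 1 + k)

/-- π is the prefix table of x[1..n] (1-based). -/
def IsPrefixTable {α : Type*} (x : ℕ → α) (n : ℕ) (π : ℕ → ℕ) : Prop :=
  π 1 = n ∧ ∀ i, 2 ≤ i → i ≤ n →
    i + π i ≤ n + 1 ∧ OccAt x (π i) i ∧
      ∀ ℓ, i + ℓ ≤ n + 1 → OccAt x ℓ i → ℓ ≤ π i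

/-- the prefix x[1..j] (j < i) is a border of x[1..i] iff
π[i - j + 1] ≥ j; so the prefix table determines every border of every prefix. -/
theorem border_iff_prefixTable {α : Type*} (x : ℕ → α) (n : ℕ) (π : ℕ → ℕ)
    (hπ : IsPrefixTable x n π) :
    ∀ i j, i ≤ n → j < i → (IsBorder x i j ↔ j ≤ π (i - j + 1)) := by
  intro i j hin hji
  rcases Nat.eq_zero_or_pos j with rfl | hj
  · simp [IsBorder, hji]
  · have hp2 : 2 ≤ i - j + 1 := by omega
    have hpn : i - j + 1 ≤ n := by omega
    obtain ⟨hle, hocc, hmax⟩ := hπ.2 (i - j + 1) hp2 hpn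
    constructor
    · rintro ⟨-, hb⟩
      apply hmax j (by omega)
      intro k hk
      exact (hb k hk).symm
    · intro hle2
      refine ⟨hji, fun k hk => ?_⟩
      exact (hocc k (lt_of_lt_of_le hk hle2)).symm
end

section
/- Every feasible array is the prefix table of some indeterminate string: for every integer array y[1..n] with y[1] = n and y[i] ∈ 0..n-i+1 for all i ∈ 2..n, there exists an indeterminate string x on some alphabet Σ whose prefix table equals y. -/
/-- Positions of indeterminate strings match iff their subsets intersect. -/
def IMatch {σ : Type*} (a b : Set σ) : Prop := (a ∩ b).Nonempty

/-- Occurrence (by matching) of a substring matching the prefix x[1..ℓ] at position p. -/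
def IOccAt {σ : Type*} (x : ℕ → Set σ) (ℓ p : ℕ) : Prop :=
  ∀ k < ℓ, IMatch (x (p + k)) (x (1 + k))

/-- π is the prefix table of the indeterminate string x[1..n] (1-based). -/
def IsIndetPrefixTable {σ : Type*} (x : ℕ → Set σ) (n : ℕ) (π : ℕ → ℕ) : Prop :=
  π 1 = n ∧ ∀ i, 2 ≤ i → i ≤ n →
    i + π i ≤ n + 1 ∧ IOccAt x (π i) i ∧
      ∀ ℓ, i + ℓ ≤ n + 1 → IOccAt x ℓ i → ℓ ≤ π i

/-- every feasible array y[1..n] (y 1 = n and y i ≤ n - i + 1 for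
2 ≤ i ≤ n) is the prefix table of some indeterminate string. -/
theorem feasible_is_prefixTable (n : ℕ) (y : ℕ → ℕ)
    (h1 : y 1 = n) (h2 : ∀ i, 2 ≤ i → i ≤ n → y i ≤ n - i + 1) :
    ∃ (σ : Type) (x : ℕ → Set σ),
      (∀ i, 1 ≤ i → i ≤ n → (x i).Nonempty) ∧ IsIndetPrefixTable x n y := by
  refine ⟨ℕ × ℕ, fun p =>
    {q | q = (1, p) ∨ (2 ≤ q.1 ∧ q.1 ≤ n ∧ q.2 < y q.1 ∧ (p = q.1 + q.2 ∨ p = 1 + q.2))},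
    fun i _ _ => ⟨(1, i), Or.inl rfl⟩, h1, fun i hi2 hin => ?_⟩
  have hyi := h2 i hi2 hin
  refine ⟨by omega, fun k hk => ⟨(i, k), ?_, ?_⟩, fun ℓ hℓ hocc => ?_⟩
  · exact Or.inr ⟨hi2, hin, hk, Or.inl rfl⟩
  · exact Or.inr ⟨hi2, hin, hk, Or.inr rfl⟩
  · by_contra hcon
    push_neg at hcon
    obtain ⟨q, hq1, hq2⟩ := hocc (y i) hcon
    rcases hq1 with h | ⟨ha2, han, hb, hc⟩
    · rcases hq2 with h' | ⟨ha2, _, _, _⟩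
      · have : i + y i = 1 + y i := congrArg Prod.snd (h ▸ h')
        omega
      · rw [h] at ha2; exact absurd ha2 (by norm_num)
    · rcases hq2 with h' | ⟨_, _, hb', hc'⟩
      · rw [h'] at ha2; exact absurd ha2 (by norm_num)
      · have hab : q.1 = i ∧ q.2 = y i := by omega
        rw [hab.1, hab.2] at hb
        omega
end

section
/- There exists an indeterminate string x of length 3 whose longest border has length 2 and whose longest border x[1..2] has a border of length 1, yet x itself has no border of length 1; hence the cascading property of the border array fails for indeterminate strings. -/
/-- x[1..j] is a border of the indeterminate string x[1..i]:
a proper prefix that matches (≈, positionwise) the suffix of the same length. -/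
def IsIndetBorder {σ : Type*} (x : ℕ → Set σ) (i j : ℕ) : Prop :=
  j < i ∧ ∀ k < j, IMatch (x (1 + k)) (x (i - j + 1 + k))

/-- there is an indeterminate string of length 3 whose longest
border has length 2, the border x[1..2] itself has a border of length 1,
yet x has no border of length 1: the cascading property fails. -/
theorem border_cascade_fails_indeterminate :
    ∃ (σ : Type) (x : ℕ → Set σ),
      (∀ i, 1 ≤ i → i ≤ 3 → (x i).Nonempty) ∧
      IsIndetBorder x 3 2 ∧
      (∀ j, IsIndetBorder x 3 j → j ≤ 2) ∧
      IsIndetBorder x 2 1 ∧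
      ¬ IsIndetBorder x 3 1 := by
  refine ⟨Bool, fun n => if n = 1 then {true} else if n = 3 then {false} else Set.univ,
    ?_, ?_, ?_, ?_, ?_⟩
  · intro i h1 h3
    interval_cases i <;> simp
  · refine ⟨by norm_num, ?_⟩
    intro k hk
    interval_cases k
    · exact ⟨true, by simp, by simp⟩
    · refine ⟨false, ?_, ?_⟩ <;> simp
  · intro j ⟨hj, _⟩; omega
  · refine ⟨by norm_num, ?_⟩
    intro k hk
    interval_cases k
    simp [IMatch, Set.inter_nonempty]
  · rintro ⟨-, h⟩
    have := h 0 (by norm_num)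
    simp [IMatch, Set.inter_nonempty] at this
end

section
/- The prefix table of an indeterminate string correctly determines all borders of every prefix: for an indeterminate string x with prefix table π, x[1..j] is a border of x[1..i] (j < i) if and only if π[i-j+1] ≥ j. -/
/-- for an indeterminate string x with prefix table π,
x[1..j] is a border of x[1..i] (j < i ≤ n) iff π[i - j + 1] ≥ j. -/
theorem indet_border_iff_prefixTable {σ : Type*} (x : ℕ → Set σ) (n : ℕ)
    (π : ℕ → ℕ) (hπ : IsIndetPrefixTable x n π) :
    ∀ i j, i ≤ n → j < i → (IsIndetBorder x i j ↔ j ≤ π (i - j + 1)) := by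

  intro i j hin hji
  rcases Nat.eq_zero_or_pos j with rfl | hj
  · simp [IsIndetBorder, hji]
  · set p := i - j + 1 with hp
    have hp2 : 2 ≤ p := by omega
    have hpn : p ≤ n := by omega
    obtain ⟨hle, hocc, hmax⟩ := hπ.2 p hp2 hpn
    constructor
    · rintro ⟨-, hb⟩
      exact hmax j (by omega) (fun k hk => ⟨(hb k hk).choose, (hb k hk).choose_spec.2, (hb k hk).choose_spec.1⟩)
    · intro hjp
      refine ⟨hji, fun k hk => ?_⟩
      obtain ⟨a, ha1, ha2⟩ := hocc k (lt_of_lt_of_le hk hjp)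
      exact ⟨a, ha2, ha1⟩
end

section
/- If x[1..j] is the shortest cover of a string x[1..n], then x[1..j] has no cover (it is superprimitive), and every cover of x of length greater than j is itself covered by x[1..j]. -/
/-- if x[1..j] is the shortest cover of x[1..n], then x[1..j]
has no cover (it is superprimitive), and every cover of x of length greater
than j is itself covered by x[1..j]. -/
theorem shortest_cover_superprimitive {α : Type*} (x : ℕ → α) (n j : ℕ)
    (hcov : Covers x n j) (hshort : ∀ j', Covers x n j' → j ≤ j') :
    (¬ ∃ v, Covers x j v) ∧ ∀ j', Covers x n j' → j < j' → Covers x j' j := by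
  obtain ⟨hj0, hjn, hc⟩ := hcov
  constructor
  · rintro ⟨v, hv0, hvj, hvc⟩
    -- v covers x[1..n] by transitivity, contradicting minimality
    have : Covers x n v := by
      refine ⟨hv0, by omega, fun t ht1 htn => ?_⟩
      obtain ⟨p, hp1, hpn, hpt, htp, hocc⟩ := hc t ht1 htn
      obtain ⟨q, hq1, hqj, hqt, htq, hoccv⟩ := hvc (t - p + 1) (by omega) (by omega)
      refine ⟨p + q - 1, by omega, by omega, by omega, by omega, fun k hk => ?_⟩
      have h1 : p + q - 1 + k = p + (q - 1 + k) := by omega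
      have h2 : q - 1 + k < j := by omega
      have h3 : 1 + (q - 1 + k) = q + k := by omega
      rw [h1, hocc _ h2, h3, hoccv k hk]
    have := hshort v this
    omega
  · rintro j' ⟨hj'0, hj'n, hc'⟩ hjj'
    -- j is a suffix of x[1..n]
    obtain ⟨p, hp1, hpn, hpt, htp, hocc⟩ := hc n (by omega) le_rfl
    have hp : p = n + 1 - j := by omega
    subst hp
    -- j' is a suffix of x[1..n]
    obtain ⟨p', hp'1, hp'n, hp't, htp', hocc'⟩ := hc' n (by omega) le_rfl
    have hp' : p' = n + 1 - j' := by omega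
    subst hp'
    -- hence j occurs at position j' - j + 1 (suffix of prefix j')
    have hoccq : OccAt x j (j' - j + 1) := by
      intro k hk
      have h1 : j' - j + 1 + k = 1 + (j' - j + k) := by omega
      have h2 : j' - j + k < j' := by omega
      have h3 : n + 1 - j' + (j' - j + k) = n + 1 - j + k := by omega
      rw [h1, ← hocc' _ h2, h3, hocc k hk]
    refine ⟨hj0, hjj', fun t ht1 htj' => ?_⟩
    obtain ⟨p, hp1, hpn, hpt, htp, hocc2⟩ := hc t ht1 (by omega)
    by_cases hcase : p + j ≤ j' + 1
    · exact ⟨p, hp1, hcase, hpt, htp, hocc2⟩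
    · exact ⟨j' - j + 1, by omega, by omega, by omega, by omega, hoccq⟩
end

section
/- The indeterminate string x = {a,b} c {a,c} {a,c} c a has a sliding cover of length 2 but no rooted cover of length 2; hence sliding covers and rooted covers are distinct notions for indeterminate strings. -/
/-- x[1..n] has a sliding cover of length κ: x has a suffix v of length κ, a
proper prefix u = x[1..m] with m ≥ n - κ whose length-κ suffix v' matches v,
and either u = v' (i.e. m = κ, constructor `base`) or u itself has a sliding
cover of length κ (constructor `step`). -/
inductive HasSlidingCover {σ : Type*} (x : ℕ → Set σ) (κ : ℕ) : ℕ → Prop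
  | base (n : ℕ) (h2 : κ < n) (h3 : n - κ ≤ κ)
      (hmatch : ∀ k < κ, IMatch (x (1 + k)) (x (n - κ + 1 + k))) :
      HasSlidingCover x κ n
  | step (n m : ℕ) (h1 : κ ≤ m) (h2 : m < n) (h3 : n - κ ≤ m)
      (hmatch : ∀ k < κ, IMatch (x (m - κ + 1 + k)) (x (n - κ + 1 + k)))
      (hrec : HasSlidingCover x κ m) : HasSlidingCover x κ n

/-- x[1..κ] is a rooted cover of x[1..n]: every position of x lies within a
length-κ substring of x matching the prefix x[1..κ]. -/
def RootedCover {σ : Type*} (x : ℕ → Set σ) (n κ : ℕ) : Prop :=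
  0 < κ ∧ κ < n ∧ ∀ t, 1 ≤ t → t ≤ n →
    ∃ p, 1 ≤ p ∧ p + κ ≤ n + 1 ∧ p ≤ t ∧ t < p + κ ∧
      ∀ k < κ, IMatch (x (p + k)) (x (1 + k))

/-- The indeterminate string x = {a,b} c {a,c} {a,c} c a over Σ = {a,b,c},
encoded with a = 0, b = 1, c = 2 (1-based positions). -/
def exStr : ℕ → Set (Fin 3)
  | 1 => {0, 1}
  | 2 => {2}
  | 3 => {0, 2}
  | 4 => {0, 2}
  | 5 => {2}
  | 6 => {0}
  | _ => {0}

/-- x = {a,b} c {a,c} {a,c} c a has a sliding cover of length 2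
but no rooted cover of length 2, so the two notions are distinct. -/
theorem sliding_ne_rooted :
    HasSlidingCover exStr 2 6 ∧ ¬ RootedCover exStr 6 2 := by
  constructor
  · apply HasSlidingCover.step 6 4 (by norm_num) (by norm_num) (by norm_num)
    · intro k hk
      interval_cases k
      · exact ⟨2, by simp [exStr], by simp [exStr]⟩
      · exact ⟨0, by simp [exStr], by simp [exStr]⟩
    · apply HasSlidingCover.base 4 (by norm_num) (by norm_num)
      intro k hk
      interval_cases k
      · exact ⟨0, by simp [exStr], by simp [exStr]⟩
      · exact ⟨2, by simp [exStr], by simp [exStr]⟩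
  · rintro ⟨-, -, h⟩
    obtain ⟨p, hp1, hp2, hp3, hp4, hm⟩ := h 6 (by norm_num) (by norm_num)
    have hp : p = 5 := by omega
    subst hp
    obtain ⟨y, hy1, hy2⟩ := hm 0 (by norm_num)
    simp [exStr] at hy1 hy2
    subst hy1
    rcases hy2 with h|h <;> exact absurd h (by decide)
end
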